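/- Let μ be an ε-product probability measure on V = V₁×⋯×V_k and let T₁,T₂ ⊆ [k]. Then for every f ∈ L²(V,μ), ‖A_{T₂}(A_{T₁}f) − A_{T₁∩T₂}f‖₂ ≤ |T₁|·|T₂|·ε·‖f‖₂. -/

import Mathlib

/-!
Write `T₁ = (T₁ ∩ T₂) ∪ R` with `R` disjoint from `T₂` and remove the coordinates of `R` one at a
time. Removing `i` costs `‖A_{Q ∪ T₂} g - A_Q g‖` for a `Q ∪ {i}`-junta `g`, which telescopes over
the coordinates `j ∈ T₂` into `|T₂|` one-step differences `‖A_{Q ∪ {j}} g - A_Q g‖`. On the link of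
a point `x_Q` such a difference is `A_{j}` applied to a function of `x_i` alone, minus its mean, and
the `ε`-pseudorandomness of the `{i, j}`-skeleton of that link bounds its norm by `ε ‖g‖`.
-/

open Finset

namespace GLL

variable {k : ℕ} {V : Fin k → Type} [∀ i, Fintype (V i)] [∀ i, DecidableEq (V i)]

/-- Expectation of `f` with respect to the (finitely supported) measure `μ`. -/
def expect (μ f : (∀ i, V i) → ℝ) : ℝ := ∑ x, μ x * f x

/-- `μ` is a probability measure. -/
def IsProb (μ : (∀ i, V i) → ℝ) : Prop := (∀ x, 0 ≤ μ x) ∧ ∑ x, μ x = 1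

/-- The marginal `μ_S` evaluated at (the `S`-coordinates of) `x`. -/
def marg (μ : (∀ i, V i) → ℝ) (S : Finset (Fin k)) (x : ∀ i, V i) : ℝ :=
  ∑ z, if ∀ i ∈ S, z i = x i then μ z else 0

/-- The link (conditional) measure `μ_x` for `x ∈ V_S`, viewed as a measure on
full points agreeing with `x` on `S`. -/
noncomputable def cond (μ : (∀ i, V i) → ℝ) (S : Finset (Fin k)) (x z : ∀ i, V i) : ℝ :=
  if ∀ i ∈ S, z i = x i then μ z / marg μ S x else 0

/-- The averaging operator `A_S`: `A_S f (x) = E_{y ∼ μ_{x_S}} [f(x_S, y)]`.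
Applied to an `S'`-junta `f`, this is also the operator `A_{S',S}`. -/
noncomputable def Aop (μ : (∀ i, V i) → ℝ) (S : Finset (Fin k)) (f : (∀ i, V i) → ℝ)
    (x : ∀ i, V i) : ℝ :=
  ∑ z, cond μ S x z * f z

/-- The Efron–Stein component `f^{=S} = ∑_{T ⊆ S} (-1)^{|S∖T|} A_T f`. -/
noncomputable def ES (μ : (∀ i, V i) → ℝ) (S : Finset (Fin k)) (f : (∀ i, V i) → ℝ)
    (x : ∀ i, V i) : ℝ :=
  ∑ T ∈ S.powerset, (-1 : ℝ) ^ (S.card - T.card) * Aop μ T f x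

/-- The low-degree part `f^{≤ d} = ∑_{|S| ≤ d} f^{=S}`. -/
noncomputable def lowPart (μ : (∀ i, V i) → ℝ) (d : ℕ) (f : (∀ i, V i) → ℝ)
    (x : ∀ i, V i) : ℝ :=
  ∑ S ∈ univ.powerset.filter (fun S : Finset (Fin k) => S.card ≤ d), ES μ S f x

/-- The Laplacian `L_S[f] = ∑_{T ⊇ S} f^{=T}`. -/
noncomputable def Lap (μ : (∀ i, V i) → ℝ) (S : Finset (Fin k)) (f : (∀ i, V i) → ℝ)
    (x : ∀ i, V i) : ℝ :=
  ∑ T ∈ univ.powerset.filter (fun T : Finset (Fin k) => S ⊆ T), ES μ T f x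

/-- The truncated Laplacian `L_S^{≤d}[f] = ∑_{T ⊇ S, |T| ≤ d} f^{=T}`. -/
noncomputable def LapLe (μ : (∀ i, V i) → ℝ) (d : ℕ) (S : Finset (Fin k))
    (f : (∀ i, V i) → ℝ) (x : ∀ i, V i) : ℝ :=
  ∑ T ∈ univ.powerset.filter (fun T : Finset (Fin k) => S ⊆ T ∧ T.card ≤ d), ES μ T f x

/-- The influence `I_{S,x}[f] = ‖L_S[f](x,·)‖²_{L²(μ_x)}`. -/
noncomputable def Inf (μ : (∀ i, V i) → ℝ) (S : Finset (Fin k)) (f : (∀ i, V i) → ℝ)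
    (x : ∀ i, V i) : ℝ :=
  ∑ z, cond μ S x z * (Lap μ S f z) ^ 2

/-- The truncated influence `I^{≤d}_{S,x}[f] = ‖L_S^{≤d}[f](x,·)‖²_{L²(μ_x)}`. -/
noncomputable def InfLe (μ : (∀ i, V i) → ℝ) (d : ℕ) (S : Finset (Fin k))
    (f : (∀ i, V i) → ℝ) (x : ∀ i, V i) : ℝ :=
  ∑ z, cond μ S x z * (LapLe μ d S f z) ^ 2

/-- `‖f‖₂²` with respect to `μ`. -/
def normSq (μ f : (∀ i, V i) → ℝ) : ℝ := ∑ x, μ x * (f x) ^ 2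

/-- `‖f‖₄⁴` with respect to `μ`. -/
def norm4p4 (μ f : (∀ i, V i) → ℝ) : ℝ := ∑ x, μ x * (f x) ^ 4

/-- `‖f‖₂` with respect to `μ`. -/
noncomputable def l2norm (μ f : (∀ i, V i) → ℝ) : ℝ := Real.sqrt (normSq μ f)

/-- `‖f‖_∞`: the maximum of `|f|` over the support of `μ`. -/
noncomputable def supNorm (μ f : (∀ i, V i) → ℝ) : ℝ :=
  sSup ((fun x => |f x|) '' {x | 0 < μ x})

/-- Inner product `⟨f, g⟩ = E_{x∼μ}[f(x) g(x)]`. -/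
def inner' (μ f g : (∀ i, V i) → ℝ) : ℝ := ∑ x, μ x * (f x * g x)

/-- The pair `{i,j}`-skeleton of `μ` is `ε`-pseudorandom. -/
def PairPseudo (μ : (∀ i, V i) → ℝ) (ε : ℝ) (i j : Fin k) : Prop :=
  ∀ (f₁ : V i → ℝ) (f₂ : V j → ℝ),
    |expect μ (fun x => f₁ (x i) * f₂ (x j)) -
        expect μ (fun x => f₁ (x i)) * expect μ (fun x => f₂ (x j))| ≤
      ε * Real.sqrt
        ((expect μ (fun x => f₁ (x i) ^ 2) - expect μ (fun x => f₁ (x i)) ^ 2) *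
          (expect μ (fun x => f₂ (x j) ^ 2) - expect μ (fun x => f₂ (x j)) ^ 2))

/-- `μ` is an `ε`-product measure: every link of every restriction of size `≤ k - 2`
has `ε`-pseudorandom skeletons. -/
def EpsProduct (μ : (∀ i, V i) → ℝ) (ε : ℝ) : Prop :=
  ∀ S : Finset (Fin k), S.card ≤ k - 2 → ∀ x, 0 < marg μ S x →
    ∀ i j : Fin k, i ∉ S → j ∉ S → i ≠ j → PairPseudo (cond μ S x) ε i j

/-- `‖f(x,·)‖_{L²(μ_x)}` for `x ∈ V_S`. -/
noncomputable def restrictNorm (μ : (∀ i, V i) → ℝ) (S : Finset (Fin k)) (x : ∀ i, V i)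
    (f : (∀ i, V i) → ℝ) : ℝ :=
  Real.sqrt (∑ z, cond μ S x z * (f z) ^ 2)

/-- `f` is `(d, δ)`-global: all restrictions of at most `d` coordinates have
`2`-norm at most `δ`. -/
def IsGlobal (μ : (∀ i, V i) → ℝ) (d : ℕ) (δ : ℝ) (f : (∀ i, V i) → ℝ) : Prop :=
  ∀ S : Finset (Fin k), S.card ≤ d → ∀ x, 0 < marg μ S x → restrictNorm μ S x f ≤ δ

/-- `f` is an `S`-junta: it depends only on the coordinates in `S`. -/
def Junta (S : Finset (Fin k)) (f : (∀ i, V i) → ℝ) : Prop :=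
  ∀ x y, (∀ i ∈ S, x i = y i) → f x = f y

/-- The noise operator `T_ρ f = ∑_{S ⊆ [k]} ρ^{|S|} (1-ρ)^{k-|S|} A_S f`. -/
noncomputable def noiseOp (μ : (∀ i, V i) → ℝ) (ρ : ℝ) (f : (∀ i, V i) → ℝ)
    (x : ∀ i, V i) : ℝ :=
  ∑ S ∈ (univ : Finset (Fin k)).powerset, ρ ^ S.card * (1 - ρ) ^ (k - S.card) * Aop μ S f x

/-- The up-down walk operator `T = (1/k) ∑_{i=1}^k A_{[k]∖{i}}`. -/
noncomputable def upDown (μ : (∀ i, V i) → ℝ) (f : (∀ i, V i) → ℝ) (x : ∀ i, V i) : ℝ :=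
  (1 / (k : ℝ)) * ∑ i : Fin k, Aop μ (univ.erase i) f x

/-- The product measure `μ₁ ⊗ ⋯ ⊗ μ_k`. -/
def prodMeasure (μi : ∀ i, V i → ℝ) : (∀ i, V i) → ℝ := fun x => ∏ i, μi i (x i)

/-- `f` has degree at most `d`: `f^{=S} = 0` whenever `|S| > d`. -/
def DegLe (μ : (∀ i, V i) → ℝ) (d : ℕ) (f : (∀ i, V i) → ℝ) : Prop :=
  ∀ S : Finset (Fin k), d < S.card → ∀ x, ES μ S f x = 0

/-- `{F S}_{S ⊆ [k]}` is an `(α, ε')`-approximate Efron–Stein decomposition of `f`. -/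
noncomputable def ApproxES (μ : (∀ i, V i) → ℝ) (α ε' : ℝ) (f : (∀ i, V i) → ℝ)
    (F : Finset (Fin k) → (∀ i, V i) → ℝ) : Prop :=
  l2norm μ f ≤ α ∧
    l2norm μ (fun x => f x - ∑ S ∈ (univ : Finset (Fin k)).powerset, F S x) ≤ ε' ∧
    ∀ S : Finset (Fin k), ∃ h : (∀ i, V i) → ℝ,
      l2norm μ h ≤ α ∧ l2norm μ (fun x => ES μ S h x - F S x) ≤ ε'

end GLL

namespace GLL

variable {k : ℕ} {V : Fin k → Type}

lemma agree_union_iff {S T : Finset (Fin k)} {x z w : ∀ i, V i} (hz : ∀ i ∈ S, z i = x i) :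
    (∀ i ∈ S ∪ T, w i = z i) ↔ (∀ i ∈ T, w i = z i) ∧ ∀ i ∈ S, w i = x i := by
  simp only [Finset.mem_union, or_imp, forall_and]
  exact ⟨fun ⟨hS, hT⟩ => ⟨hT, fun i hi => (hS i hi).trans (hz i hi)⟩,
    fun ⟨hT, hS⟩ => ⟨fun i hi => (hS i hi).trans (hz i hi).symm, hT⟩⟩

lemma Junta.mono {S T : Finset (Fin k)} {f : (∀ i, V i) → ℝ} (hf : Junta S f) (hST : S ⊆ T) :
    Junta T f :=
  fun x y h => hf x y fun i hi => h i (hST hi)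

lemma Junta.eq_update {i : Fin k} {f : (∀ i, V i) → ℝ} (hf : Junta {i} f) (x₀ x : ∀ i, V i) :
    f x = f (Function.update x₀ i (x i)) :=
  hf _ _ fun t ht => by rw [Finset.mem_singleton.1 ht, Function.update_self]

section

variable [∀ i, Fintype (V i)] {ν : (∀ i, V i) → ℝ}

lemma normSq_eq_expect (f : (∀ i, V i) → ℝ) : normSq ν f = expect ν (fun x => f x ^ 2) := rfl

lemma expect_congr {f g : (∀ i, V i) → ℝ} (h : ∀ z, ν z ≠ 0 → f z = g z) :
    expect ν f = expect ν g :=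
  Finset.sum_congr rfl fun z _ => by
    by_cases hz : ν z = 0
    · simp [hz]
    · rw [h z hz]

lemma normSq_congr {f g : (∀ i, V i) → ℝ} (h : ∀ z, ν z ≠ 0 → f z = g z) :
    normSq ν f = normSq ν g :=
  expect_congr fun z hz => by rw [h z hz]

lemma expect_sub_const (hν : IsProb ν) (f : (∀ i, V i) → ℝ) (c : ℝ) :
    expect ν (fun x => f x - c) = expect ν f - c := by
  simp only [expect, mul_sub, Finset.sum_sub_distrib, ← Finset.sum_mul, hν.2, one_mul]

lemma normSq_nonneg (h0 : ∀ z, 0 ≤ ν z) (f : (∀ i, V i) → ℝ) : 0 ≤ normSq ν f :=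
  Finset.sum_nonneg fun z _ => mul_nonneg (h0 z) (sq_nonneg _)

lemma l2norm_nonneg (f : (∀ i, V i) → ℝ) : 0 ≤ l2norm ν f := Real.sqrt_nonneg _

lemma l2norm_eq_norm (h0 : ∀ z, 0 ≤ ν z) (f : (∀ i, V i) → ℝ) :
    l2norm ν f = ‖(WithLp.toLp 2 fun x => √(ν x) * f x : EuclideanSpace ℝ (∀ i, V i))‖ := by
  rw [EuclideanSpace.norm_eq, l2norm, normSq]
  congr 1
  refine Finset.sum_congr rfl fun x _ => ?_
  rw [Real.norm_eq_abs, sq_abs, mul_pow, Real.sq_sqrt (h0 x)]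

lemma l2norm_add_le (h0 : ∀ z, 0 ≤ ν z) (f g : (∀ i, V i) → ℝ) :
    l2norm ν (fun x => f x + g x) ≤ l2norm ν f + l2norm ν g := by
  simp only [l2norm_eq_norm h0, mul_add]
  exact norm_add_le (E := EuclideanSpace ℝ (∀ i, V i)) (WithLp.toLp 2 _) (WithLp.toLp 2 _)

lemma l2norm_le_of_normSq_le {c : ℝ} (hc : 0 ≤ c) {f g : (∀ i, V i) → ℝ}
    (h : normSq ν f ≤ c ^ 2 * normSq ν g) : l2norm ν f ≤ c * l2norm ν g := by
  rw [l2norm, l2norm, ← Real.sqrt_sq hc, ← Real.sqrt_mul (sq_nonneg c)]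
  exact Real.sqrt_le_sqrt h

lemma sq_expect_le_normSq (hν : IsProb ν) (f : (∀ i, V i) → ℝ) :
    expect ν f ^ 2 ≤ normSq ν f := by
  simpa only [expect, normSq, smul_eq_mul] using
    (even_two.convexOn_pow (𝕜 := ℝ)).map_sum_le (t := Finset.univ) (p := f)
      (fun z _ => hν.1 z) hν.2 (fun _ _ => Set.mem_univ _)

lemma PairPseudo.abs_inner'_sub_le [Nonempty (∀ i, V i)] {ε : ℝ} {i j : Fin k}
    (hps : PairPseudo ν ε i j) {g h : (∀ i, V i) → ℝ} (hg : Junta {i} g) (hh : Junta {j} h) :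
    |inner' ν g h - expect ν g * expect ν h| ≤
      ε * √((normSq ν g - expect ν g ^ 2) * (normSq ν h - expect ν h ^ 2)) := by
  have key := hps (fun a => g (Function.update (Classical.arbitrary _) i a))
    (fun b => h (Function.update (Classical.arbitrary _) j b))
  simp only [← hg.eq_update, ← hh.eq_update] at key
  exact key

variable [∀ i, DecidableEq (V i)]

lemma Aop_eq_expect_cond (S : Finset (Fin k)) (f : (∀ i, V i) → ℝ) (x : ∀ i, V i) :
    Aop ν S f x = expect (cond ν S x) f := rfl

lemma marg_nonneg (h0 : ∀ z, 0 ≤ ν z) (S : Finset (Fin k)) (x : ∀ i, V i) :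
    0 ≤ marg ν S x :=
  Finset.sum_nonneg fun z _ => by split_ifs <;> simp [h0 z]

lemma le_marg (h0 : ∀ z, 0 ≤ ν z) (S : Finset (Fin k)) (x : ∀ i, V i) :
    ν x ≤ marg ν S x := by
  simpa [marg] using Finset.single_le_sum (f := fun z => if ∀ i ∈ S, z i = x i then ν z else 0)
    (fun z _ => by split_ifs <;> simp [h0 z]) (Finset.mem_univ x)

lemma marg_ne_zero (h0 : ∀ z, 0 ≤ ν z) (S : Finset (Fin k)) {x : ∀ i, V i} (hx : ν x ≠ 0) :
    marg ν S x ≠ 0 :=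
  ((lt_of_le_of_ne (h0 x) (Ne.symm hx)).trans_le (le_marg h0 S x)).ne'

lemma marg_congr {S : Finset (Fin k)} {x y : ∀ i, V i} (h : ∀ i ∈ S, x i = y i) :
    marg ν S x = marg ν S y :=
  Finset.sum_congr rfl fun z _ => if_congr (forall₂_congr fun i hi => by rw [h i hi]) rfl rfl

lemma cond_congr {S : Finset (Fin k)} {x y : ∀ i, V i} (h : ∀ i ∈ S, x i = y i) :
    cond ν S x = cond ν S y := by
  funext z
  rw [cond, cond, marg_congr h, if_congr (forall₂_congr fun i hi => by rw [h i hi]) rfl rfl]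

lemma cond_nonneg (h0 : ∀ z, 0 ≤ ν z) (S : Finset (Fin k)) (x z : ∀ i, V i) :
    0 ≤ cond ν S x z := by
  unfold cond
  split_ifs
  exacts [div_nonneg (h0 z) (marg_nonneg h0 S x), le_rfl]

lemma agree_of_cond_ne_zero {S : Finset (Fin k)} {x z : ∀ i, V i} (h : cond ν S x z ≠ 0) :
    ∀ i ∈ S, z i = x i := by
  by_contra hc
  exact h (if_neg hc)

lemma ne_zero_of_cond_ne_zero {S : Finset (Fin k)} {x z : ∀ i, V i} (h : cond ν S x z ≠ 0) :
    ν z ≠ 0 := by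
  contrapose! h
  simp [cond, h]

lemma marg_ne_zero_of_cond_ne_zero {S : Finset (Fin k)} {x z : ∀ i, V i}
    (h : cond ν S x z ≠ 0) : marg ν S x ≠ 0 := by
  contrapose! h
  simp [cond, h]

lemma sum_cond {S : Finset (Fin k)} {x : ∀ i, V i} (hm : marg ν S x ≠ 0) :
    ∑ z, cond ν S x z = 1 := by
  have h : ∀ z, cond ν S x z = (if ∀ i ∈ S, z i = x i then ν z else 0) / marg ν S x :=
    fun z => by unfold cond; split_ifs <;> simp
  simp_rw [h, ← Finset.sum_div]
  exact div_self hm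

lemma isProb_cond (h0 : ∀ z, 0 ≤ ν z) {S : Finset (Fin k)} {x : ∀ i, V i}
    (hm : marg ν S x ≠ 0) : IsProb (cond ν S x) :=
  ⟨cond_nonneg h0 S x, sum_cond hm⟩

lemma Aop_congr {f g : (∀ i, V i) → ℝ} (h : ∀ z, ν z ≠ 0 → f z = g z)
    (S : Finset (Fin k)) (x : ∀ i, V i) : Aop ν S f x = Aop ν S g x :=
  expect_congr fun z hz => h z (ne_zero_of_cond_ne_zero hz)

lemma Aop_sub (S : Finset (Fin k)) (f g : (∀ i, V i) → ℝ) (x : ∀ i, V i) :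
    Aop ν S (fun z => f z - g z) x = Aop ν S f x - Aop ν S g x := by
  simp only [Aop, mul_sub, Finset.sum_sub_distrib]

lemma junta_Aop (S : Finset (Fin k)) (f : (∀ i, V i) → ℝ) : Junta S (Aop ν S f) :=
  fun x y h => by rw [Aop, Aop, cond_congr h]

lemma Aop_eq_self_of_junta {S : Finset (Fin k)} {f : (∀ i, V i) → ℝ} (hf : Junta S f)
    {x : ∀ i, V i} (hm : marg ν S x ≠ 0) : Aop ν S f x = f x := by
  calc Aop ν S f x = expect (cond ν S x) fun _ => f x :=
        expect_congr fun z hz => hf z x (agree_of_cond_ne_zero hz)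
    _ = f x := by rw [expect, ← Finset.sum_mul, sum_cond hm, one_mul]

lemma sum_mul_cond (h0 : ∀ z, 0 ≤ ν z) (S : Finset (Fin k)) (z : ∀ i, V i) :
    ∑ x, ν x * cond ν S x z = ν z := by
  have h : ∀ x, ν x * cond ν S x z =
      (if ∀ i ∈ S, x i = z i then ν x else 0) * (ν z / marg ν S z) := fun x => by
    unfold cond
    by_cases hx : ∀ i ∈ S, x i = z i
    · rw [if_pos fun i hi => (hx i hi).symm, if_pos hx, marg_congr hx]
    · rw [if_neg fun h' => hx fun i hi => (h' i hi).symm, if_neg hx]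
      ring
  rw [Finset.sum_congr rfl fun x _ => h x, ← Finset.sum_mul, ← marg]
  by_cases hz : ν z = 0
  · simp [hz]
  · exact mul_div_cancel₀ _ (marg_ne_zero h0 S hz)

lemma expect_Aop (h0 : ∀ z, 0 ≤ ν z) (S : Finset (Fin k)) (f : (∀ i, V i) → ℝ) :
    expect ν (Aop ν S f) = expect ν f := by
  simp only [expect, Aop, Finset.mul_sum, ← mul_assoc]
  rw [Finset.sum_comm]
  simp only [← Finset.sum_mul, sum_mul_cond h0]

lemma normSq_le_of_forall_cond (h0 : ∀ z, 0 ≤ ν z) (S : Finset (Fin k)) {c : ℝ}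
    {f g : (∀ i, V i) → ℝ}
    (h : ∀ x, ν x ≠ 0 → normSq (cond ν S x) f ≤ c * normSq (cond ν S x) g) :
    normSq ν f ≤ c * normSq ν g := by
  rw [normSq_eq_expect, normSq_eq_expect, ← expect_Aop h0 S, ← expect_Aop h0 S (fun x => g x ^ 2),
    expect, expect, Finset.mul_sum]
  refine Finset.sum_le_sum fun x _ => ?_
  by_cases hx : ν x = 0
  · simp [hx]
  · rw [mul_left_comm]
    exact mul_le_mul_of_nonneg_left (h x hx) (h0 x)

lemma marg_cond {S T : Finset (Fin k)} {x z : ∀ i, V i} (hz : cond ν S x z ≠ 0) :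
    marg (cond ν S x) T z = marg ν (S ∪ T) z / marg ν S x := by
  rw [marg, marg, Finset.sum_div]
  refine Finset.sum_congr rfl fun w _ => ?_
  rw [if_congr (agree_union_iff (agree_of_cond_ne_zero hz)) rfl rfl, ite_and, cond]
  split_ifs <;> simp

lemma cond_cond {S T : Finset (Fin k)} {x z : ∀ i, V i} (hz : cond ν S x z ≠ 0) :
    cond (cond ν S x) T z = cond ν (S ∪ T) z := by
  funext w
  rw [cond, marg_cond hz]
  unfold cond
  rw [if_congr (agree_union_iff (agree_of_cond_ne_zero hz)) rfl rfl, ite_and]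
  split_ifs
  · exact div_div_div_cancel_right₀ (marg_ne_zero_of_cond_ne_zero hz) _ _
  all_goals simp

lemma Aop_cond {S : Finset (Fin k)} {x z : ∀ i, V i} (hz : cond ν S x z ≠ 0)
    (T : Finset (Fin k)) (f : (∀ i, V i) → ℝ) :
    Aop (cond ν S x) T f z = Aop ν (S ∪ T) f z := by
  rw [Aop, Aop, cond_cond hz]

lemma Aop_Aop_of_subset (h0 : ∀ z, 0 ≤ ν z) {S T : Finset (Fin k)} (hST : S ⊆ T)
    (f : (∀ i, V i) → ℝ) (x : ∀ i, V i) : Aop ν S (Aop ν T f) x = Aop ν S f x :=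
  calc Aop ν S (Aop ν T f) x = expect (cond ν S x) (Aop (cond ν S x) T f) :=
        expect_congr fun z hz => by rw [Aop_cond hz, Finset.union_eq_right.2 hST]
    _ = Aop ν S f x := expect_Aop (cond_nonneg h0 S x) T f

lemma Aop_mul_of_junta {S : Finset (Fin k)} {h : (∀ i, V i) → ℝ} (hh : Junta S h)
    (f : (∀ i, V i) → ℝ) (x : ∀ i, V i) :
    Aop ν S f x * h x = Aop ν S (fun z => f z * h z) x := by
  rw [Aop, Finset.sum_mul]
  exact Finset.sum_congr rfl fun z _ => by
    by_cases hz : cond ν S x z = 0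
    · simp [hz]
    · rw [hh x z fun i hi => (agree_of_cond_ne_zero hz i hi).symm, mul_assoc]

lemma inner'_Aop_of_junta (h0 : ∀ z, 0 ≤ ν z) {S : Finset (Fin k)} {h : (∀ i, V i) → ℝ}
    (hh : Junta S h) (f : (∀ i, V i) → ℝ) :
    inner' ν (Aop ν S f) h = inner' ν f h := by
  simp only [inner', Aop_mul_of_junta hh]
  exact expect_Aop h0 S _

lemma normSq_Aop_le (h0 : ∀ z, 0 ≤ ν z) (S : Finset (Fin k)) (f : (∀ i, V i) → ℝ) :
    normSq ν (Aop ν S f) ≤ normSq ν f := by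
  rw [normSq_eq_expect f, ← expect_Aop h0 S]
  refine Finset.sum_le_sum fun x _ => ?_
  by_cases hx : ν x = 0
  · simp [hx]
  · exact mul_le_mul_of_nonneg_left
      (sq_expect_le_normSq (isProb_cond h0 (marg_ne_zero h0 S hx)) f) (h0 x)

lemma l2norm_Aop_le (h0 : ∀ z, 0 ≤ ν z) (S : Finset (Fin k)) (f : (∀ i, V i) → ℝ) :
    l2norm ν (Aop ν S f) ≤ l2norm ν f :=
  Real.sqrt_le_sqrt (normSq_Aop_le h0 S f)

lemma normSq_Aop_singleton_sub_expect_le (hν : IsProb ν) {ε : ℝ} (hε : 0 ≤ ε) {i j : Fin k}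
    (hps : PairPseudo ν ε i j) {g : (∀ i, V i) → ℝ} (hg : Junta {i} g) :
    normSq ν (fun x => Aop ν {j} g x - expect ν g) ≤ ε ^ 2 * normSq ν g := by
  have : Nonempty (∀ i, V i) := by
    by_contra hempty
    rw [not_nonempty_iff] at hempty
    simpa using hν.2
  set h := fun x => Aop ν {j} g x - expect ν g
  have hh : Junta {j} h := fun x y hxy => by simp only [h, junta_Aop {j} g x y hxy]
  have hEh : expect ν h = 0 := by rw [expect_sub_const hν, expect_Aop hν.1, sub_self]
  -- `h` has mean zero and `Aop ν {j}` is self-adjoint against `{j}`-juntas, so `‖h‖² = ⟨g, h⟩`.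
  have hnorm : normSq ν h = inner' ν g h := by
    rw [← inner'_Aop_of_junta hν.1 hh]
    calc normSq ν h = ∑ x, ν x * (Aop ν {j} g x * h x) - expect ν g * ∑ x, ν x * h x := by
          rw [normSq, Finset.mul_sum, ← Finset.sum_sub_distrib]
          exact Finset.sum_congr rfl fun x _ => by simp only [h]; ring
      _ = inner' ν (Aop ν {j} g) h - expect ν g * expect ν h := rfl
      _ = inner' ν (Aop ν {j} g) h := by rw [hEh, mul_zero, sub_zero]
  have hcov := hps.abs_inner'_sub_le hg hh
  rw [hEh, mul_zero, sub_zero, ← hnorm, zero_pow two_ne_zero, sub_zero] at hcov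
  have hG := normSq_nonneg hν.1 g
  have hN := normSq_nonneg hν.1 h
  have hbound : normSq ν h ≤ ε * √(normSq ν g * normSq ν h) :=
    (le_abs_self _).trans (hcov.trans (mul_le_mul_of_nonneg_left
      (Real.sqrt_le_sqrt (mul_le_mul_of_nonneg_right (sub_le_self _ (sq_nonneg _)) hN)) hε))
  rw [Real.sqrt_mul hG] at hbound
  nlinarith [Real.sq_sqrt hG, Real.sq_sqrt hN, Real.sqrt_nonneg (normSq ν g),
    Real.sqrt_nonneg (normSq ν h),
    sq_nonneg (ε * √(normSq ν g) - √(normSq ν h))]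

lemma card_le_sub_two {Q : Finset (Fin k)} {i j : Fin k} (hiQ : i ∉ Q) (hjQ : j ∉ Q)
    (hij : i ≠ j) : Q.card ≤ k - 2 := by
  have h := Finset.card_le_univ (insert i (insert j Q))
  rw [Finset.card_insert_of_notMem (by simp [hij, hiQ]), Finset.card_insert_of_notMem hjQ,
    Fintype.card_fin] at h
  omega

lemma EpsProduct.pairPseudo_cond (h0 : ∀ z, 0 ≤ ν z) {ε : ℝ} (hprod : EpsProduct ν ε)
    {Q : Finset (Fin k)} {i j : Fin k} (hiQ : i ∉ Q) (hjQ : j ∉ Q) (hij : i ≠ j)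
    {x : ∀ i, V i} (hx : ν x ≠ 0) : PairPseudo (cond ν Q x) ε i j :=
  hprod Q (card_le_sub_two hiQ hjQ hij) x
    ((marg_nonneg h0 Q x).lt_of_ne (marg_ne_zero h0 Q hx).symm) i j hiQ hjQ hij

lemma normSq_Aop_insert_sub_le (h0 : ∀ z, 0 ≤ ν z) {ε : ℝ} (hε : 0 ≤ ε)
    (hprod : EpsProduct ν ε) {i j : Fin k} (hij : i ≠ j) {Q : Finset (Fin k)} (hiQ : i ∉ Q)
    {g : (∀ i, V i) → ℝ} (hg : Junta (insert i Q) g) :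
    normSq ν (fun z => Aop ν (insert j Q) g z - Aop ν Q g z) ≤ ε ^ 2 * normSq ν g := by
  by_cases hjQ : j ∈ Q
  · simpa [Finset.insert_eq_of_mem hjQ, normSq] using
      mul_nonneg (sq_nonneg ε) (normSq_nonneg h0 g)
  refine normSq_le_of_forall_cond h0 Q fun x hx => ?_
  set ν' := cond ν Q x
  -- On the link of `x`, the `insert i Q`-junta `g` only sees coordinate `i`.
  set g' : (∀ i, V i) → ℝ := fun z => g (Function.update x i (z i))
  have hg' : ∀ z, ν' z ≠ 0 → g z = g' z := fun z hz => hg _ _ fun t ht => by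
    rcases Finset.mem_insert.1 ht with rfl | htQ
    · simp
    · rw [Function.update_of_ne (ne_of_mem_of_not_mem htQ hiQ), agree_of_cond_ne_zero hz t htQ]
  have hg'i : Junta {i} g' := fun y y' hyy' => by
    simp only [g', hyy' i (Finset.mem_singleton_self i)]
  calc normSq ν' (fun z => Aop ν (insert j Q) g z - Aop ν Q g z)
      = normSq ν' (fun z => Aop ν' {j} g' z - expect ν' g') := normSq_congr fun z hz => by
        rw [Finset.insert_eq, Finset.union_comm, ← Aop_cond hz, Aop_congr hg',
          junta_Aop Q g z x (agree_of_cond_ne_zero hz), Aop_eq_expect_cond Q g x, expect_congr hg']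
    _ ≤ ε ^ 2 * normSq ν' g' :=
        normSq_Aop_singleton_sub_expect_le (isProb_cond h0 (marg_ne_zero h0 Q hx)) hε
          (hprod.pairPseudo_cond h0 hiQ hjQ hij hx) hg'i
    _ = ε ^ 2 * normSq ν' g := by rw [normSq_congr hg']

lemma l2norm_Aop_union_sub_le (h0 : ∀ z, 0 ≤ ν z) {ε : ℝ} (hε : 0 ≤ ε)
    (hprod : EpsProduct ν ε) {i : Fin k} {S : Finset (Fin k)} (hiS : i ∉ S)
    {g : (∀ i, V i) → ℝ} (hg : Junta (insert i S) g) {T : Finset (Fin k)} (hiT : i ∉ T) :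
    l2norm ν (fun x => Aop ν (S ∪ T) g x - Aop ν S g x) ≤ T.card * ε * l2norm ν g := by
  induction T using Finset.induction_on with
  | empty => simp [l2norm, normSq]
  | insert j T hjT ih =>
    have hiT' : i ∉ T := fun h => hiT (Finset.mem_insert_of_mem h)
    have hij : i ≠ j := fun h => hiT (h ▸ Finset.mem_insert_self j T)
    have step := l2norm_le_of_normSq_le hε (normSq_Aop_insert_sub_le h0 hε hprod hij
      (Q := S ∪ T) (by simp [hiS, hiT']) (hg.mono (Finset.insert_subset_insert i
        Finset.subset_union_left)))
    calc l2norm ν (fun x => Aop ν (S ∪ insert j T) g x - Aop ν S g x)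
        = l2norm ν (fun x => (Aop ν (insert j (S ∪ T)) g x - Aop ν (S ∪ T) g x) +
            (Aop ν (S ∪ T) g x - Aop ν S g x)) := by
          rw [Finset.union_insert]
          congr 1
          funext x
          ring
      _ ≤ ε * l2norm ν g + T.card * ε * l2norm ν g :=
          (l2norm_add_le h0 _ _).trans (add_le_add step (ih hiT'))
      _ = (insert j T).card * ε * l2norm ν g := by
          rw [Finset.card_insert_of_notMem hjT]
          push_cast
          ring

lemma l2norm_Aop_Aop_sub_le (h0 : ∀ z, 0 ≤ ν z) {ε : ℝ} (hε : 0 ≤ ε)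
    (hprod : EpsProduct ν ε) {I T : Finset (Fin k)} (hIT : I ⊆ T) (f : (∀ i, V i) → ℝ)
    {R : Finset (Fin k)} (hRT : Disjoint R T) :
    l2norm ν (fun x => Aop ν T (Aop ν (I ∪ R) f) x - Aop ν I f x) ≤
      R.card * T.card * ε * l2norm ν f := by
  induction R using Finset.induction_on with
  | empty =>
    have hzero : ∀ x, ν x ≠ 0 → Aop ν T (Aop ν (I ∪ ∅) f) x - Aop ν I f x = 0 := fun x hx => by
      rw [Finset.union_empty,
        Aop_eq_self_of_junta ((junta_Aop I f).mono hIT) (marg_ne_zero h0 T hx), sub_self]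
    rw [l2norm, normSq_congr hzero]
    simp [normSq]
  | insert i R hiR ih =>
    have hiT : i ∉ T := Finset.disjoint_left.1 hRT (Finset.mem_insert_self i R)
    have hiIR : i ∉ I ∪ R := by
      simp only [Finset.mem_union, not_or]
      exact ⟨fun h => hiT (hIT h), hiR⟩
    set g := Aop ν (I ∪ insert i R) f
    have hg : Junta (insert i (I ∪ R)) g := by
      rw [← Finset.union_insert]
      exact junta_Aop _ f
    have hgf : Aop ν (I ∪ R) g = Aop ν (I ∪ R) f :=
      funext (Aop_Aop_of_subset h0 (Finset.union_subset_union_right (Finset.subset_insert i R)) f)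
    have hsplit : (fun x => Aop ν T g x - Aop ν I f x) = fun x =>
        Aop ν T (fun z => Aop ν (I ∪ R ∪ T) g z - Aop ν (I ∪ R) g z) x +
          (Aop ν T (Aop ν (I ∪ R) f) x - Aop ν I f x) := by
      funext x
      rw [Aop_sub, Aop_Aop_of_subset h0 Finset.subset_union_right, hgf]
      ring
    have hfirst : l2norm ν (Aop ν T fun z => Aop ν (I ∪ R ∪ T) g z - Aop ν (I ∪ R) g z) ≤
        T.card * ε * l2norm ν f :=
      (l2norm_Aop_le h0 T _).trans ((l2norm_Aop_union_sub_le h0 hε hprod hiIR hg hiT).trans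
        (mul_le_mul_of_nonneg_left (l2norm_Aop_le h0 _ f) (by positivity)))
    calc l2norm ν (fun x => Aop ν T g x - Aop ν I f x)
        ≤ T.card * ε * l2norm ν f + R.card * T.card * ε * l2norm ν f := by
          rw [hsplit]
          exact (l2norm_add_le h0 _ _).trans (add_le_add hfirst (ih (hRT.mono_left
            (Finset.subset_insert i R))))
      _ = (insert i R).card * T.card * ε * l2norm ν f := by
          rw [Finset.card_insert_of_notMem hiR]
          push_cast
          ring

end

theorem statement11_general (k : ℕ)
    (V : Fin k → Type) [∀ i, Fintype (V i)] [∀ i, DecidableEq (V i)]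
    (μ : (∀ i, V i) → ℝ) (ε : ℝ) (hε : 0 ≤ ε) (hμ : IsProb μ) (hprod : EpsProduct μ ε)
    (T₁ T₂ : Finset (Fin k)) (f : (∀ i, V i) → ℝ) :
    l2norm μ (fun x => Aop μ T₂ (Aop μ T₁ f) x - Aop μ (T₁ ∩ T₂) f x) ≤
      (T₁.card : ℝ) * T₂.card * ε * l2norm μ f := by
  have h := l2norm_Aop_Aop_sub_le hμ.1 hε hprod (Finset.inter_subset_right (s₁ := T₁)) f
    (R := T₁ \ T₂) Finset.sdiff_disjoint
  rw [Finset.union_comm, Finset.sdiff_union_inter] at h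
  refine h.trans ?_
  gcongr
  exacts [l2norm_nonneg f, Finset.sdiff_subset]

theorem statement11 (k : ℕ) (hk : 1 ≤ k)
    (V : Fin k → Type) [∀ i, Fintype (V i)] [∀ i, DecidableEq (V i)]
    (μ : (∀ i, V i) → ℝ) (ε : ℝ) (hε : 0 ≤ ε) (hμ : IsProb μ) (hprod : EpsProduct μ ε)
    (T₁ T₂ : Finset (Fin k)) (f : (∀ i, V i) → ℝ) :
    l2norm μ (fun x => Aop μ T₂ (Aop μ T₁ f) x - Aop μ (T₁ ∩ T₂) f x) ≤
      (T₁.card : ℝ) * T₂.card * ε * l2norm μ f :=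
  statement11_general k V μ ε hε hμ hprod T₁ T₂ f
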